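/- arXiv:2511.16638 — 4 statements merged into one kernel-verified Lean document; each statement's English description precedes it below -/
import Mathlib

section
/- For any a ∈ F, the linear map r : H_n → H_n defined by r(X) = a·X_{1,2}·e_{1,n-1} + a·X_{n-1,n}·e_{2,n} is a commuting map, i.e., r(X)·X = X·r(X) for all X ∈ H_n. -/
open Matrix

/-- `X` belongs to the Heisenberg algebra `H_n`: its only possibly nonzero entries lie
in the first row strictly above the diagonal or the last column strictly above the diagonal
(0-based indices: row 0 with column ≠ 0, or column `n-1` with row ≠ `n-1`). -/
def IsHeis {n : ℕ} {F : Type*} [Field F] (X : Matrix (Fin n) (Fin n) F) : Prop :=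
  ∀ i j : Fin n, ¬ ((i.val = 0 ∧ j.val ≠ 0) ∨ (j.val = n - 1 ∧ i.val ≠ n - 1)) → X i j = 0

/-- Anti-transpose: `(antiT X) i j = X (rev j) (rev i)`. -/
def antiT {n : ℕ} {F : Type*} [Field F] (X : Matrix (Fin n) (Fin n) F) :
    Matrix (Fin n) (Fin n) F :=
  Matrix.of fun i j => X j.rev i.rev

/-- `A ∈ C_n`: first and last rows and columns of `A` are zero. -/
def IsC {n : ℕ} {F : Type*} [Field F] (A : Matrix (Fin n) (Fin n) F) : Prop :=
  ∀ i j : Fin n, (i.val = 0 ∨ i.val = n - 1 ∨ j.val = 0 ∨ j.val = n - 1) → A i j = 0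

/-- `A ∈ P_n`: hollow skew-persymmetric matrices in `C_n`. -/
def IsP {n : ℕ} {F : Type*} [Field F] (A : Matrix (Fin n) (Fin n) F) : Prop :=
  IsC A ∧ (∀ i j : Fin n, antiT A i j = - A i j) ∧ (∀ i : Fin n, A i i.rev = 0)

/-! A Heisenberg matrix has zero first column and zero last row, its row `n-1` lives in the last
column and its column `2` in the first row (here `3 ≤ n` is used). Hence, in the paper's 1-based
indexing, `e_{1,n-1} X = x_{n-1,n} e_{1,n}`, `X e_{2,n} = x_{12} e_{1,n}` and
`X e_{1,n-1} = e_{2,n} X = 0`, so both `r(X) X` and `X r(X)` equal `a x_{12} x_{n-1,n} e_{1,n}`. -/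

namespace Matrix

variable {l m n α : Type*} [Fintype m] [NonUnitalNonAssocSemiring α]

theorem single_mul_eq_zero [DecidableEq l] [DecidableEq m] (i : l) (j : m) (c : α)
    {M : Matrix m n α} (hM : ∀ k, M j k = 0) : single i j c * M = 0 := by
  ext a b
  by_cases ha : a = i
  · subst ha; simp [hM]
  · simp [ha]

theorem mul_single_eq_zero [DecidableEq m] [DecidableEq n] (i : m) (j : n) (c : α)
    {M : Matrix l m α} (hM : ∀ k, M k i = 0) : M * single i j c = 0 := by
  ext a b
  by_cases hb : b = j
  · subst hb; simp [hM]
  · simp [hb]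

theorem single_mul_eq_single [DecidableEq l] [DecidableEq m] [DecidableEq n]
    (i : l) (j : m) (c : α) {M : Matrix m n α} {q : n} (hM : ∀ k, k ≠ q → M j k = 0) :
    single i j c * M = single i q (c * M j q) := by
  ext a b
  by_cases ha : a = i
  · subst ha
    by_cases hb : b = q
    · subst hb; simp
    · simp [hM b hb, Ne.symm hb]
  · simp [ha, Ne.symm ha]

theorem mul_single_eq_single [DecidableEq l] [DecidableEq m] [DecidableEq n]
    (i : m) (j : n) (c : α) {M : Matrix l m α} {p : l} (hM : ∀ k, k ≠ p → M k i = 0) :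
    M * single i j c = single p j (M p i * c) := by
  ext a b
  by_cases hb : b = j
  · subst hb
    by_cases ha : a = p
    · subst ha; simp
    · simp [hM a ha, Ne.symm ha]
  · simp [hb, Ne.symm hb]

end Matrix

namespace IsHeis

variable {n : ℕ} {F : Type*} [Field F] {X : Matrix (Fin n) (Fin n) F}

theorem apply_eq_zero (hX : IsHeis X) {i j : Fin n} (hi : i.val ≠ 0) (hj : j.val ≠ n - 1) :
    X i j = 0 :=
  hX i j (by omega)

theorem apply_last_row (hX : IsHeis X) {i : Fin n} (hi : i.val = n - 1) (j : Fin n) :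
    X i j = 0 :=
  hX i j (by omega)

theorem apply_first_col (hX : IsHeis X) (i : Fin n) {j : Fin n} (hj : j.val = 0) :
    X i j = 0 :=
  hX i j (by omega)

end IsHeis

theorem stmt2 {n : ℕ} (hn : 3 ≤ n) {F : Type*} [Field F] (a : F)
    (r : Matrix (Fin n) (Fin n) F → Matrix (Fin n) (Fin n) F)
    (hr : ∀ X, r X =
        (a * X ⟨0, by omega⟩ ⟨1, by omega⟩) •
          Matrix.single ⟨0, by omega⟩ ⟨n - 2, by omega⟩ (1 : F)
      + (a * X ⟨n - 2, by omega⟩ ⟨n - 1, by omega⟩) •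
          Matrix.single ⟨1, by omega⟩ ⟨n - 1, by omega⟩ (1 : F)) :
    ∀ X, IsHeis X → r X * X = X * r X := by
  intro X hX
  have row_n_sub_two : ∀ k : Fin n, k ≠ ⟨n - 1, by omega⟩ → X ⟨n - 2, by omega⟩ k = 0 :=
    fun k hk => hX.apply_eq_zero (show n - 2 ≠ 0 by omega) (fun h => hk (Fin.ext h))
  have col_one : ∀ k : Fin n, k ≠ ⟨0, by omega⟩ → X k ⟨1, by omega⟩ = 0 :=
    fun k hk => hX.apply_eq_zero (fun h => hk (Fin.ext h)) (show 1 ≠ n - 1 by omega)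
  rw [hr, add_mul, mul_add, Matrix.smul_mul, Matrix.mul_smul, Matrix.smul_mul, Matrix.mul_smul,
    single_mul_eq_single _ _ _ row_n_sub_two,
    mul_single_eq_zero _ _ _ (hX.apply_first_col · rfl),
    single_mul_eq_zero _ _ _ (hX.apply_last_row rfl),
    mul_single_eq_single _ _ _ col_one,
    smul_zero, smul_zero, add_zero, zero_add, smul_single, smul_single]
  congr 1
  ring
end

section
/- Given scalars a_1, …, a_{n-1} ∈ F, the linear map g : H_n → H_n that sends X to the matrix with (1,j)-entry a_{j-1}·X_{1,j} for 2 ≤ j ≤ n and (i,n)-entry a_{i-1}·X_{i,n} for 2 ≤ i ≤ n−1 (all other entries zero) is a commuting map: g(X)X = Xg(X) for all X ∈ H_n. -/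
open Matrix

/-!
A product `X * Y` of two elements of `H_n` has a single possibly nonzero entry,
`(X * Y) 0 (n-1) = ∑_{0 < k < n-1} X 0 k * Y k (n-1)`. Scaling `X` entrywise by weights that agree
on the positions `(0, k)` and `(k, n-1)` therefore makes `(c ⊙ X) * X` and `X * (c ⊙ X)` agree
term by term, and `g` is such a scaling with weight `a k` on both positions.
-/

theorem IsHeis.indices_of_mul_ne_zero {n : ℕ} {F : Type*} [Field F]
    {X Y : Matrix (Fin n) (Fin n) F}
    (hX : IsHeis X) (hY : IsHeis Y) {i k j : Fin n} (h : X i k * Y k j ≠ 0) :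
    i.val = 0 ∧ j.val = n - 1 ∧ k.val ≠ 0 ∧ k.val ≠ n - 1 := by
  obtain ⟨hik, hkj⟩ := mul_ne_zero_iff.mp h
  have hik' := not_imp_comm.mp (hX i k) hik
  have hkj' := not_imp_comm.mp (hY k j) hkj
  omega

theorem IsHeis.hadamard_mul_self_comm {n : ℕ} {F : Type*} [Field F]
    {X : Matrix (Fin n) (Fin n) F}
    (hX : IsHeis X) (c : Matrix (Fin n) (Fin n) F)
    (hc : ∀ i k j : Fin n, i.val = 0 → j.val = n - 1 → k.val ≠ 0 → k.val ≠ n - 1 →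
      c i k = c k j) :
    (c ⊙ X) * X = X * (c ⊙ X) := by
  ext i j
  simp only [mul_apply, hadamard_apply]
  refine Finset.sum_congr rfl fun k _ => ?_
  by_cases h : X i k * X k j = 0
  · linear_combination c i k * h - c k j * h
  · obtain ⟨hi, hj, hk0, hkn⟩ := hX.indices_of_mul_ne_zero hX h
    rw [hc i k j hi hj hk0 hkn]
    ring

theorem stmt3_general {n : ℕ} {F : Type*} [Field F] (a : ℕ → F)
    (g : Matrix (Fin n) (Fin n) F → Matrix (Fin n) (Fin n) F)
    (hg : ∀ X, g X = Matrix.of fun i j : Fin n =>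
        if i.val = 0 ∧ j.val ≠ 0 then a j.val * X i j
        else if j.val = n - 1 ∧ i.val ≠ 0 ∧ i.val ≠ n - 1 then a i.val * X i j
        else 0) :
    ∀ X, IsHeis X → g X * X = X * g X := by
  intro X hX
  set c : Matrix (Fin n) (Fin n) F := Matrix.of fun i j : Fin n =>
    if i.val = 0 ∧ j.val ≠ 0 then a j.val
    else if j.val = n - 1 ∧ i.val ≠ 0 ∧ i.val ≠ n - 1 then a i.val
    else 0
  have hgX : g X = c ⊙ X := by
    ext i j
    simp only [hg, c, of_apply, hadamard_apply, ite_mul, zero_mul]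
  rw [hgX]
  refine hX.hadamard_mul_self_comm c fun i k j hi hj hk0 hkn => ?_
  simp [c, hi, hj, hk0, hkn]

theorem stmt3 {n : ℕ} (hn : 3 ≤ n) {F : Type*} [Field F] (a : ℕ → F)
    (g : Matrix (Fin n) (Fin n) F → Matrix (Fin n) (Fin n) F)
    (hg : ∀ X, g X = Matrix.of fun i j : Fin n =>
        if i.val = 0 ∧ j.val ≠ 0 then a j.val * X i j
        else if j.val = n - 1 ∧ i.val ≠ 0 ∧ i.val ≠ n - 1 then a i.val * X i j
        else 0) :
    ∀ X, IsHeis X → g X * X = X * g X :=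
  stmt3_general a g hg
end

section
/- For any matrix B ∈ P_n (hollow skew-persymmetric matrix in C_n), the map X ↦ X^τ B is a commuting map on H_n: (X^τ B)X − X(X^τ B) = 0 for all X ∈ H_n, where X^τ denotes the anti-transpose (X^τ)_{i,j} = X_{n-j+1, n-i+1}. -/
open Matrix

/-! A matrix `X ∈ H_n` vanishes in column `0`, and outside the first row it lives in the last
column, so `M = X^τ B` (with `B ∈ C_n`) is supported in row `0` away from the first and last
columns. Hence `X M = 0`, and `M X` has at most one nonzero entry, in position `(0, n-1)`,
namely `∑ l k, v l B (rev l) k v k` where `v` is the last column of `X`. Skew-persymmetry and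
hollowness of `B` say exactly that `(B (rev l) k)_{l,k}` is alternating (skew with zero
diagonal), so this quadratic form vanishes. -/

theorem Finset.sum_sum_eq_zero_of_add_swap_eq_zero {ι M : Type*} [Fintype ι] [AddCommMonoid M]
    (f : ι → ι → M) (hswap : ∀ i j, f i j + f j i = 0) (hdiag : ∀ i, f i i = 0) :
    ∑ i, ∑ j, f i j = 0 := by
  rw [← Finset.sum_product']
  refine Finset.sum_ninvolution Prod.swap (fun p => hswap p.1 p.2) ?_ (by simp) Prod.swap_swap
  rintro ⟨i, j⟩ hne hfix
  obtain rfl : i = j := congrArg Prod.fst hfix.symm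
  exact hne (hdiag i)

section

variable {n : ℕ} {F : Type*} [Field F]

theorem IsHeis.apply_eq_zero_of_val_eq_zero {X : Matrix (Fin n) (Fin n) F} (hX : IsHeis X)
    (i : Fin n) {j : Fin n} (hj : j.val = 0) : X i j = 0 :=
  hX i j (by omega)

theorem IsHeis.apply_eq_zero_of_val_ne {X : Matrix (Fin n) (Fin n) F} (hX : IsHeis X)
    {i j : Fin n} (hi : i.val ≠ 0) (hj : j.val ≠ n - 1) : X i j = 0 :=
  hX i j (by omega)

theorem IsC.mul_apply_eq_zero {B : Matrix (Fin n) (Fin n) F} (hB : IsC B)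
    (A : Matrix (Fin n) (Fin n) F) (i : Fin n) {k : Fin n} (hk : k.val = 0 ∨ k.val = n - 1) :
    (A * B) i k = 0 := by
  rw [mul_apply]
  exact Finset.sum_eq_zero fun l _ => by rw [hB l k (by omega), mul_zero]

theorem antiT_mul_apply_eq_zero {X B : Matrix (Fin n) (Fin n) F} (hX : IsHeis X) (hB : IsC B)
    {i : Fin n} (hi : i.val ≠ 0) (k : Fin n) : (antiT X * B) i k = 0 := by
  rw [mul_apply]
  refine Finset.sum_eq_zero fun l _ => ?_
  by_cases hl : l.val = 0 ∨ l.val = n - 1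
  · rw [hB l k (by omega), mul_zero]
  · have hXl : X l.rev i.rev = 0 := hX.apply_eq_zero_of_val_ne (by simp only [Fin.val_rev]; omega)
      (by simp only [Fin.val_rev]; omega)
    rw [antiT, of_apply, hXl, zero_mul]

theorem mul_antiT_mul_eq_zero {X B : Matrix (Fin n) (Fin n) F} (hX : IsHeis X) (hB : IsC B) :
    X * (antiT X * B) = 0 := by
  ext i j
  rw [Matrix.zero_apply, mul_apply]
  refine Finset.sum_eq_zero fun k _ => ?_
  rcases eq_or_ne k.val 0 with hk | hk
  · rw [hX.apply_eq_zero_of_val_eq_zero i hk, zero_mul]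
  · rw [antiT_mul_apply_eq_zero hX hB hk, mul_zero]

theorem IsP.apply_rev_eq_neg {B : Matrix (Fin n) (Fin n) F} (hB : IsP B) (k l : Fin n) :
    B k.rev l = -B l.rev k := by
  simpa [antiT] using hB.2.1 l.rev k

theorem IsP.sum_sum_mul_apply_rev_mul_eq_zero {B : Matrix (Fin n) (Fin n) F} (hB : IsP B)
    (v : Fin n → F) : ∑ l, ∑ k, v l * B l.rev k * v k = 0 := by
  refine Finset.sum_sum_eq_zero_of_add_swap_eq_zero _ (fun l k => ?_) (fun l => ?_)
  · rw [hB.apply_rev_eq_neg k l]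
    ring
  · rw [show B l.rev l = 0 by simpa using hB.2.2 l.rev, mul_zero, zero_mul]

theorem antiT_mul_mul_apply_of_rev_eq (X B : Matrix (Fin n) (Fin n) F) {i j : Fin n}
    (hij : i.rev = j) : (antiT X * B * X) i j = ∑ l, ∑ k, X l j * B l.rev k * X k j := by
  calc (antiT X * B * X) i j
      = ∑ l, ∑ k, X l.rev j * B l k * X k j := by
        simp only [mul_apply, Finset.sum_mul, antiT, of_apply, hij]
        exact Finset.sum_comm
    _ = ∑ l, ∑ k, X l j * B l.rev k * X k j := by
        simpa using (Equiv.sum_comp Fin.revPerm fun l => ∑ k, X l.rev j * B l k * X k j).symm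

theorem antiT_mul_mul_eq_zero {X B : Matrix (Fin n) (Fin n) F} (hX : IsHeis X) (hB : IsP B) :
    antiT X * B * X = 0 := by
  ext i j
  rw [Matrix.zero_apply]
  by_cases hi : i.val = 0
  · by_cases hj : j.val = n - 1
    · rw [antiT_mul_mul_apply_of_rev_eq X B (Fin.ext (by simp only [Fin.val_rev]; omega))]
      exact hB.sum_sum_mul_apply_rev_mul_eq_zero fun k => X k j
    · rw [mul_apply]
      refine Finset.sum_eq_zero fun k _ => ?_
      by_cases hk : k.val = 0 ∨ k.val = n - 1
      · rw [hB.1.mul_apply_eq_zero _ i hk, zero_mul]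
      · rw [hX.apply_eq_zero_of_val_ne (by omega) hj, mul_zero]
  · rw [mul_apply]
    exact Finset.sum_eq_zero fun k _ => by rw [antiT_mul_apply_eq_zero hX hB.1 hi, zero_mul]

end

theorem stmt6_general {n : ℕ} {F : Type*} [Field F]
    (B : Matrix (Fin n) (Fin n) F) (hB : IsP B) :
    ∀ X, IsHeis X → (antiT X * B) * X = X * (antiT X * B) := by
  intro X hX
  rw [antiT_mul_mul_eq_zero hX hB, mul_antiT_mul_eq_zero hX hB.1]

theorem stmt6 {n : ℕ} (hn : 3 ≤ n) {F : Type*} [Field F] [CharZero F]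
    (B : Matrix (Fin n) (Fin n) F) (hB : IsP B) :
    ∀ X, IsHeis X → (antiT X * B) * X = X * (antiT X * B) :=
  stmt6_general B hB
end

section
/- Let B be the n×n matrix with B_{2,j} = 1 for 2 ≤ j ≤ n−2, B_{i,2} = 1 for 3 ≤ i ≤ n−2, B_{i,n-1} = −1 for 3 ≤ i ≤ n−1, B_{n-1,j} = −1 for 3 ≤ j ≤ n−2, and all other entries zero. Then the map h(X) = [X^τ, B] = X^τ B − B X^τ satisfies [h(X), X] = 0 for all X ∈ H_n, i.e., h is a commuting map, and h is linear. -/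
open Matrix

/-!
Every `X ∈ H_n` has the form `X = e₀ uᵀ + v eₗᵀ` with `u₀ = 0` and `v_l = 0` (`l = n - 1`), and
then `X^τ = (Ju) eₗᵀ + e₀ (Jv)ᵀ`, where `J` reverses coordinates. The matrix `B` is
skew-persymmetric (`B^τ = -B`) with zero first column, hence also zero last row, so
`[X^τ, B] = e₀ (Jv)ᵀB - (BJu) eₗᵀ` has the same shape as `X`. Multiplying out, every term of
`[X^τ, B] X` and of `X [X^τ, B]` vanishes, either because `u₀ = v_l = 0`, or because `B` kills
`e₀` and `eₗᵀ`, or because the form `w ↦ (Jw)ᵀ B w` is zero (`JB` is skew-symmetric and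
`2 ≠ 0`). So both products are `0`.
-/

section Rev

variable {F : Type*} [Field F] {n : ℕ}

theorem antiT_add (X Y : Matrix (Fin n) (Fin n) F) : antiT (X + Y) = antiT X + antiT Y := by
  ext; simp [antiT]

theorem antiT_smul (c : F) (X : Matrix (Fin n) (Fin n) F) : antiT (c • X) = c • antiT X := by
  ext; simp [antiT]

theorem antiT_vecMulVec (a b : Fin n → F) :
    antiT (vecMulVec a b) = vecMulVec (b ∘ Fin.rev) (a ∘ Fin.rev) := by
  ext; simp [antiT, vecMulVec_apply, mul_comm]

theorem transpose_eq_neg_submatrix_rev {B : Matrix (Fin n) (Fin n) F} (hB : antiT B = -B) :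
    Bᵀ = -B.submatrix Fin.rev Fin.rev := by
  ext i j
  simpa [antiT] using congr_fun₂ hB i.rev j.rev

theorem submatrix_rev_mulVec (B : Matrix (Fin n) (Fin n) F) (w : Fin n → F) :
    B.submatrix Fin.rev Fin.rev *ᵥ (w ∘ Fin.rev) = (B *ᵥ w) ∘ Fin.rev := by
  ext i
  exact Fintype.sum_equiv Fin.revPerm _ _ fun j => by simp

theorem comp_rev_dotProduct (v w : Fin n → F) : (v ∘ Fin.rev) ⬝ᵥ w = v ⬝ᵥ (w ∘ Fin.rev) :=
  Fintype.sum_equiv Fin.revPerm _ _ fun j => by simp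

theorem comp_rev_dotProduct_mulVec_self [NeZero (2 : F)] {B : Matrix (Fin n) (Fin n) F}
    (hB : antiT B = -B) (w : Fin n → F) : (w ∘ Fin.rev) ⬝ᵥ (B *ᵥ w) = 0 := by
  have h : (w ∘ Fin.rev) ⬝ᵥ (B *ᵥ w) = -((w ∘ Fin.rev) ⬝ᵥ (B *ᵥ w)) := calc
    _ = w ⬝ᵥ (Bᵀ *ᵥ (w ∘ Fin.rev)) := by
      rw [dotProduct_mulVec, dotProduct_comm, mulVec_transpose]
    _ = _ := by
      rw [transpose_eq_neg_submatrix_rev hB, neg_mulVec, dotProduct_neg, submatrix_rev_mulVec,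
        comp_rev_dotProduct]
  have h2 : (2 : F) * ((w ∘ Fin.rev) ⬝ᵥ (B *ᵥ w)) = 0 := by linear_combination h
  exact (mul_eq_zero.mp h2).resolve_left two_ne_zero

end Rev

section Heisenberg

variable {F : Type*} [Field F] {m : ℕ}

def heisMatrix (u v : Fin (m + 1) → F) : Matrix (Fin (m + 1)) (Fin (m + 1)) F :=
  vecMulVec (Pi.single 0 1) u + vecMulVec v (Pi.single (Fin.last m) 1)

theorem IsHeis.exists_eq_heisMatrix [NeZero m] {X : Matrix (Fin (m + 1)) (Fin (m + 1)) F}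
    (hX : IsHeis X) :
    ∃ u v : Fin (m + 1) → F, u 0 = 0 ∧ v (Fin.last m) = 0 ∧ X = heisMatrix u v := by
  refine ⟨X 0, Function.update (fun i => X i (Fin.last m)) 0 0, hX 0 0 (by simp), ?_, ?_⟩
  · rw [Function.update_of_ne Fin.last_pos'.ne']
    exact hX _ _ (by simp)
  · ext i j
    by_cases hi : i = 0
    · subst hi; simp [heisMatrix, vecMulVec_apply]
    by_cases hj : j = Fin.last m
    · subst hj; simp [heisMatrix, vecMulVec_apply, hi]
    simp only [heisMatrix, Matrix.add_apply, vecMulVec_apply, Pi.single_eq_of_ne hi,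
      Pi.single_eq_of_ne hj, zero_mul, mul_zero, add_zero]
    have hj' : j.val ≠ m := fun h => hj (Fin.ext h)
    exact hX i j (by simp [hi, hj'])

theorem single_zero_comp_rev (c : F) :
    (Pi.single 0 c : Fin (m + 1) → F) ∘ Fin.rev = Pi.single (Fin.last m) c :=
  (Pi.single_comp_equiv Fin.revPerm 0 c).trans (by simp)

theorem single_last_comp_rev (c : F) :
    (Pi.single (Fin.last m) c : Fin (m + 1) → F) ∘ Fin.rev = Pi.single 0 c :=
  (Pi.single_comp_equiv Fin.revPerm (Fin.last m) c).trans (by simp)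

theorem antiT_heisMatrix (u v : Fin (m + 1) → F) :
    antiT (heisMatrix u v) =
      vecMulVec (u ∘ Fin.rev) (Pi.single (Fin.last m) 1) +
        vecMulVec (Pi.single 0 1) (v ∘ Fin.rev) := by
  rw [heisMatrix, antiT_add, antiT_vecMulVec, antiT_vecMulVec, single_zero_comp_rev,
    single_last_comp_rev]

theorem mulVec_single_zero_eq_zero {B : Matrix (Fin (m + 1)) (Fin (m + 1)) F}
    (hcol : ∀ i, B i 0 = 0) : B *ᵥ Pi.single 0 1 = 0 := by
  ext i
  simp [hcol]

variable {B : Matrix (Fin (m + 1)) (Fin (m + 1)) F} (hB : antiT B = -B) (hcol : ∀ i, B i 0 = 0)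
  {u v : Fin (m + 1) → F}
include hB hcol

theorem single_last_vecMul_eq_zero : Pi.single (Fin.last m) 1 ᵥ* B = 0 := by
  ext k
  simpa [antiT, hcol] using congr_fun₂ hB k.rev 0

theorem lie_antiT_heisMatrix :
    ⁅antiT (heisMatrix u v), B⁆ =
      vecMulVec (Pi.single 0 1) ((v ∘ Fin.rev) ᵥ* B) -
        vecMulVec (B *ᵥ (u ∘ Fin.rev)) (Pi.single (Fin.last m) 1) := by
  rw [Ring.lie_def, antiT_heisMatrix, add_mul, mul_add, vecMulVec_mul, vecMulVec_mul,
    mul_vecMulVec, mul_vecMulVec, single_last_vecMul_eq_zero hB hcol,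
    mulVec_single_zero_eq_zero hcol]
  simp

variable [NeZero (2 : F)] [NeZero m]

theorem lie_antiT_heisMatrix_mul_self (hv : v (Fin.last m) = 0) :
    ⁅antiT (heisMatrix u v), B⁆ * heisMatrix u v = 0 := by
  have hv₀ : (v ∘ Fin.rev) ᵥ* B ⬝ᵥ Pi.single 0 1 = 0 := by
    rw [← dotProduct_mulVec, mulVec_single_zero_eq_zero hcol, dotProduct_zero]
  have hvv : (v ∘ Fin.rev) ᵥ* B ⬝ᵥ v = 0 := by
    rw [← dotProduct_mulVec, comp_rev_dotProduct_mulVec_self hB]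
  rw [lie_antiT_heisMatrix hB hcol, heisMatrix, sub_mul, mul_add, mul_add]
  simp [vecMulVec_mul_vecMulVec, hv₀, hvv, hv, Pi.single_eq_of_ne (Fin.last_pos' (n := m)).ne]

theorem heisMatrix_mul_lie_antiT (hu : u 0 = 0) :
    heisMatrix u v * ⁅antiT (heisMatrix u v), B⁆ = 0 := by
  have hlast : Pi.single (Fin.last m) 1 ⬝ᵥ B *ᵥ (u ∘ Fin.rev) = 0 := by
    rw [dotProduct_mulVec, single_last_vecMul_eq_zero hB hcol, zero_dotProduct]
  have huu : u ⬝ᵥ B *ᵥ (u ∘ Fin.rev) = 0 := by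
    simpa [Function.comp_def] using comp_rev_dotProduct_mulVec_self hB (u ∘ Fin.rev)
  rw [lie_antiT_heisMatrix hB hcol, heisMatrix, mul_sub, add_mul, add_mul]
  simp [vecMulVec_mul_vecMulVec, hlast, huu, hu, Pi.single_eq_of_ne (Fin.last_pos' (n := m)).ne]

end Heisenberg

theorem stmt8 {n : ℕ} (hn : 4 ≤ n) {F : Type*} [Field F] [CharZero F]
    (B : Matrix (Fin n) (Fin n) F)
    (hB : ∀ i j : Fin n, B i j =
        if i.val = 1 ∧ 1 ≤ j.val ∧ j.val ≤ n - 3 then 1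
        else if j.val = 1 ∧ 2 ≤ i.val ∧ i.val ≤ n - 3 then 1
        else if j.val = n - 2 ∧ 2 ≤ i.val ∧ i.val ≤ n - 2 then -1
        else if i.val = n - 2 ∧ 2 ≤ j.val ∧ j.val ≤ n - 3 then -1
        else 0)
    (h : Matrix (Fin n) (Fin n) F → Matrix (Fin n) (Fin n) F)
    (hh : ∀ X, h X = antiT X * B - B * antiT X) :
    (∀ X, IsHeis X → h X * X = X * h X) ∧
    (∀ X Y, h (X + Y) = h X + h Y) ∧
    (∀ (c : F) (X), h (c • X) = c • h X) := by
  obtain ⟨m, rfl⟩ : ∃ m, n = m + 1 := ⟨n - 1, by omega⟩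
  have : NeZero m := ⟨by omega⟩
  have hskew : antiT B = -B := by
    ext i j
    have := i.isLt
    have := j.isLt
    rw [antiT, of_apply, neg_apply, hB, hB i j]
    simp only [Fin.val_rev]
    split_ifs <;> first | (exfalso; omega) | norm_num
  have hcol : ∀ i, B i 0 = 0 := fun i => by
    rw [hB]
    split_ifs <;> first | rfl | (exfalso; simp only [Fin.val_zero] at *; omega)
  refine ⟨fun X hX => ?_, fun X Y => ?_, fun c X => ?_⟩
  · obtain ⟨u, v, hu, hv, rfl⟩ := hX.exists_eq_heisMatrix
    rw [hh, ← Ring.lie_def, lie_antiT_heisMatrix_mul_self hskew hcol hv,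
      heisMatrix_mul_lie_antiT hskew hcol hu]
  · rw [hh, hh, hh, antiT_add]
    noncomm_ring
  · rw [hh, hh, antiT_smul, smul_sub, Matrix.smul_mul, Matrix.mul_smul]
end
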